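/- Let b be a nonzero element of Q(Λ_{ℤ,univ}), viewed inside Λ_{ℚ,univ} = HahnSeries ℝ ℚ. Then for all sufficiently large primes p: every coefficient of b is p-integral (its denominator is prime to p), so the coefficientwise mod-p reduction [b]_p ∈ Λ_{𝔽_p,univ} = HahnSeries ℝ (ZMod p) is defined, and ν(b) ≤ ν([b]_p); equivalently, |b| ≥ |[b]_p| for the nonarchimedean norms |x| = e^{−ν(x)} (with |0| = 0). -/

import Mathlib

/-!
STATEMENT 4: Let `b` be a nonzero element of `Q(Λ_{ℤ,univ})`, viewed inside
`Λ_{ℚ,univ} = HahnSeries ℝ ℚ`. Then for all sufficiently large primes `p`: every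
coefficient of `b` is `p`-integral (its denominator is prime to `p`), so the
coefficientwise mod-`p` reduction `[b]_p ∈ Λ_{𝔽_p,univ}` is defined, and
`ν(b) ≤ ν([b]_p)` for the order valuations.
-/

noncomputable section

/-- The canonical coefficientwise embedding `Λ_{ℤ,univ} → Λ_{ℚ,univ}`. -/
def iota (x : HahnSeries ℝ ℤ) : HahnSeries ℝ ℚ := x.map (Int.castRingHom ℚ)

/-- Reduction of a (`p`-integral) rational number modulo `p`, sending `q` to
`q.num * (q.den)⁻¹` in `ZMod p`. -/
def ratRed (p : ℕ) : ZeroHom ℚ (ZMod p) where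
  toFun q := (q.num : ZMod p) * (q.den : ZMod p)⁻¹
  map_zero' := by simp

/-- Coefficientwise mod-`p` reduction `Λ_{ℚ,univ} → Λ_{𝔽_p,univ}` (meaningful on series
all of whose coefficients are `p`-integral). -/
def redQ (p : ℕ) (x : HahnSeries ℝ ℚ) : HahnSeries ℝ (ZMod p) := x.map (ratRed p)

/-!
Write `b = A / B` with `A, B ∈ Λ_{ℤ,univ}` and let `c ≠ 0` be the leading coefficient of `B`.
Over `ℤ[1/c]`, realised as the rationals whose denominator divides a power of `|c|`, the
leading coefficient of `B` is a unit, hence so is `B` itself, and therefore every coefficient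
of `b` lies in `ℤ[1/c]`. A prime `p > |c|` divides no denominator of `b`. The inequality of
valuations holds for every `p`: reduction can only kill coefficients.
-/

namespace HahnSeries

section Map

variable {Γ R S F : Type*} [LinearOrder Γ] [Zero R] [Zero S] [FunLike F R S]
  [ZeroHomClass F R S]

theorem orderTop_le_orderTop_map (x : HahnSeries Γ R) (f : F) :
    x.orderTop ≤ (x.map f).orderTop :=
  le_orderTop_iff_forall.2 fun _ hj => by
    rw [map_coeff, coeff_eq_zero_of_lt_orderTop hj, map_zero]

theorem orderTop_map_of_injective (x : HahnSeries Γ R) {f : F} (hf : Function.Injective f) :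
    (x.map f).orderTop = x.orderTop :=
  le_antisymm
    (le_orderTop_iff_forall.2 fun _ hj =>
      hf (by rw [← map_coeff, coeff_eq_zero_of_lt_orderTop hj, map_zero]))
    (orderTop_le_orderTop_map x f)

theorem leadingCoeff_map_of_injective (x : HahnSeries Γ R) {f : F}
    (hf : Function.Injective f) : (x.map f).leadingCoeff = f x.leadingCoeff := by
  simp only [leadingCoeff, orderTop_map_of_injective x hf]
  cases x.orderTop <;> simp

end Map

theorem exists_map_eq_of_mul_map_eq {Γ R K : Type*} [AddCommGroup Γ] [LinearOrder Γ]
    [IsOrderedAddMonoid Γ] [CommRing R] [IsDomain R] [Semiring K] (f : R →+* K)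
    {A B : HahnSeries Γ R} (hB : IsUnit B.leadingCoeff) {x : HahnSeries Γ K}
    (h : x * B.map f = A.map f) : ∃ y : HahnSeries Γ R, y.map f = x := by
  obtain ⟨C, hBC⟩ := isUnit_iff_exists.1 (isUnit_iff.2 hB)
  have hBC_map : B.map f * C.map f = 1 :=
    calc B.map f * C.map f = (B * C).map f := (HahnSeries.map_mul f.toNonUnitalRingHom).symm
      _ = 1 := by rw [hBC.1]; exact HahnSeries.map_one f.toMonoidWithZeroHom
  refine ⟨A * C, ?_⟩
  calc (A * C).map f = A.map f * C.map f := HahnSeries.map_mul f.toNonUnitalRingHom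
    _ = x * (B.map f * C.map f) := by rw [← h, mul_assoc]
    _ = x := by rw [hBC_map, mul_one]

end HahnSeries

open HahnSeries

def denDvdPowSubring (n : ℕ) : Subring ℚ where
  carrier := {q | ∃ k : ℕ, q.den ∣ n ^ k}
  zero_mem' := ⟨0, by simp⟩
  one_mem' := ⟨0, by simp⟩
  add_mem' := by
    rintro a b ⟨k, hk⟩ ⟨l, hl⟩
    exact ⟨k + l, (Rat.add_den_dvd a b).trans (pow_add n k l ▸ mul_dvd_mul hk hl)⟩
  mul_mem' := by
    rintro a b ⟨k, hk⟩ ⟨l, hl⟩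
    exact ⟨k + l, (Rat.mul_den_dvd a b).trans (pow_add n k l ▸ mul_dvd_mul hk hl)⟩
  neg_mem' := by
    rintro a ⟨k, hk⟩
    exact ⟨k, by rwa [Rat.neg_den]⟩

theorem inv_intCast_mem_denDvdPowSubring (c : ℤ) :
    (c : ℚ)⁻¹ ∈ denDvdPowSubring c.natAbs :=
  ⟨1, by rw [Rat.inv_intCast_den, pow_one]; split_ifs <;> simp⟩

theorem Nat.Prime.not_dvd_den_of_mem_denDvdPowSubring {p n : ℕ} (hp : p.Prime) (hpn : ¬p ∣ n)
    {q : ℚ} (hq : q ∈ denDvdPowSubring n) : ¬p ∣ q.den := by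
  obtain ⟨k, hk⟩ := hq
  exact fun hpq => hpn (hp.dvd_of_dvd_pow (hpq.trans hk))

theorem iota_eq_map_map (S : Subring ℚ) (x : HahnSeries ℝ ℤ) :
    iota x = (x.map (Int.castRingHom S)).map S.subtype := by
  ext r
  simp [iota]

theorem coeff_mem_denDvdPowSubring_of_mul_iota_eq {b : HahnSeries ℝ ℚ} {A B : HahnSeries ℝ ℤ}
    (hB : B ≠ 0) (h : b * iota B = iota A) (r : ℝ) :
    b.coeff r ∈ denDvdPowSubring B.leadingCoeff.natAbs := by
  set S := denDvdPowSubring B.leadingCoeff.natAbs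
  have hcast : Function.Injective (Int.castRingHom S) := Int.cast_injective
  have hunit : IsUnit (B.map (Int.castRingHom S)).leadingCoeff := by
    rw [leadingCoeff_map_of_injective B hcast]
    refine .of_mul_eq_one ⟨_, inv_intCast_mem_denDvdPowSubring B.leadingCoeff⟩ (Subtype.ext ?_)
    simpa using mul_inv_cancel₀ (Int.cast_ne_zero.2 (leadingCoeff_ne_zero.2 hB))
  rw [iota_eq_map_map S, iota_eq_map_map S] at h
  obtain ⟨y, rfl⟩ := exists_map_eq_of_mul_map_eq S.subtype hunit h
  exact (y.coeff r).2

theorem valuation_does_not_decrease_under_reduction_general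
    (b : HahnSeries ℝ ℚ)
    (hfrac : ∃ A B : HahnSeries ℝ ℤ, B ≠ 0 ∧ b * iota B = iota A) :
    ∃ N : ℕ, ∀ p : ℕ, p.Prime → N < p →
      (∀ r : ℝ, ¬ (p : ℕ) ∣ (b.coeff r).den) ∧
      b.orderTop ≤ (redQ p b).orderTop := by
  obtain ⟨A, B, hB, h⟩ := hfrac
  have hc : 0 < B.leadingCoeff.natAbs := Int.natAbs_pos.2 (leadingCoeff_ne_zero.2 hB)
  refine ⟨B.leadingCoeff.natAbs, fun p hp hpc => ⟨fun r => ?_, orderTop_le_orderTop_map b _⟩⟩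
  exact hp.not_dvd_den_of_mem_denDvdPowSubring (fun hdvd => (Nat.le_of_dvd hc hdvd).not_gt hpc)
    (coeff_mem_denDvdPowSubring_of_mul_iota_eq hB h r)

theorem valuation_does_not_decrease_under_reduction
    (b : HahnSeries ℝ ℚ) (hb : b ≠ 0)
    (hfrac : ∃ A B : HahnSeries ℝ ℤ, B ≠ 0 ∧ b * iota B = iota A) :
    ∃ N : ℕ, ∀ p : ℕ, p.Prime → N < p →
      (∀ r : ℝ, ¬ (p : ℕ) ∣ (b.coeff r).den) ∧
      b.orderTop ≤ (redQ p b).orderTop :=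
  valuation_does_not_decrease_under_reduction_general b hfrac

end
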